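/- arXiv:1312.1837 — 5 statements merged into one kernel-verified Lean document; each statement's English description precedes it below -/
import Mathlib

section
/- Let A = (F^t[G], λ) be a twisted group algebra with a G-graded involution θ, so that θ(x^σ) = (−1)^{q(σ)} x^σ for a map q : G → F₂. Then the map β_q(σ,τ) := q(σ) + q(τ) − q(σ+τ) satisfies (−1)^{β_q(σ,τ)} = λ(σ,τ)λ(τ,σ)^{-1} for all σ, τ ∈ G, and β_q is a group bihomomorphism G × G → F₂; hence q is a quadratic map. -/
/-!
The sign `(-1)^{β_q(σ,τ)}` is forced by `θ` to be the commutator `λ(σ,τ)λ(τ,σ)⁻¹`, and the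
commutator of a 2-cocycle on an abelian group is bimultiplicative. Since `a ↦ (-1)^a` is an
injective homomorphism `F₂ → F^×` in characteristic `≠ 2`, `β_q` is additive in the first
variable, and in the second because it is symmetric.
-/

open Function

section NegOnePowZModTwo

variable {R : Type*} [Ring R]

theorem neg_one_pow_zmod_two_val_add (a b : ZMod 2) :
    (-1 : R) ^ (a + b).val = (-1 : R) ^ a.val * (-1 : R) ^ b.val := by
  rw [ZMod.val_add, ← pow_add]
  exact (neg_one_pow_eq_pow_mod_two (R := R) _).symm

theorem neg_one_pow_zmod_two_val_injective (h : (-1 : R) ≠ 1) :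
    Injective fun a : ZMod 2 => (-1 : R) ^ a.val := by
  intro a b hab
  fin_cases a <;> fin_cases b <;> simp_all [ZMod.val, eq_comm] <;> rfl

theorem neg_one_pow_zmod_two_val_add_sub_eq_mul_inv {F : Type*} [Field F] {a b c : ZMod 2}
    {x y : F} (h : (-1 : F) ^ c.val * x = (-1 : F) ^ a.val * (-1 : F) ^ b.val * y) (hy : y ≠ 0) :
    (-1 : F) ^ (a + b - c).val = x * y⁻¹ := by
  have hc : (-1 : F) ^ c.val * (-1 : F) ^ c.val = 1 := by rw [← mul_pow]; norm_num
  rw [CharTwo.sub_eq_add, neg_one_pow_zmod_two_val_add, neg_one_pow_zmod_two_val_add,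
    eq_mul_inv_iff_mul_eq₀ hy]
  linear_combination -(-1 : F) ^ c.val * h + x * hc

end NegOnePowZModTwo

theorem cocycle_div_swap_add_left {G M : Type*} [AddCommGroup G] [CommGroup M] {l : G → G → M}
    (hl : ∀ σ τ μ : G, l (σ + τ) μ * l σ τ = l σ (τ + μ) * l τ μ) (σ σ' τ : G) :
    l (σ + σ') τ / l τ (σ + σ') = l σ τ / l τ σ * (l σ' τ / l τ σ') := by
  have h₁ := hl σ σ' τ
  have h₂ := hl σ τ σ'
  have h₃ := hl τ σ σ'
  rw [add_comm σ τ, add_comm τ σ'] at h₂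
  rw [div_mul_div_comm, div_eq_div_iff_mul_eq_mul]
  apply mul_left_cancel (a := l σ σ')
  grind

/-- Let `(F^t[G], λ)` be a twisted group algebra with a graded involution `θ`,
`θ(x^σ) = (−1)^{q(σ)} x^σ` for a map `q : G → F₂`.  The antiautomorphism property of `θ`
on basis elements reads `(−1)^{q(σ+τ)} λ(σ,τ) = (−1)^{q(σ)}(−1)^{q(τ)} λ(τ,σ)`.
Then `β_q(σ,τ) := q(σ)+q(τ)−q(σ+τ)` satisfies `(−1)^{β_q(σ,τ)} = λ(σ,τ)λ(τ,σ)⁻¹`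
and `β_q` is biadditive; hence `q` is a quadratic map. -/
theorem stmt7 {G F : Type*} [AddCommGroup G] [Field F] [CharZero F]
    (l : G → G → Fˣ)
    (hl : ∀ σ τ μ : G, l (σ + τ) μ * l σ τ = l σ (τ + μ) * l τ μ)
    (q : G → ZMod 2)
    (hθ : ∀ σ τ : G, ((-1 : F) ^ (q (σ + τ)).val) * (l σ τ : F)
        = ((-1 : F) ^ (q σ).val * (-1 : F) ^ (q τ).val) * (l τ σ : F)) :
    (∀ σ τ : G, (-1 : F) ^ ((q σ + q τ - q (σ + τ)).val)
        = (l σ τ : F) * ((l τ σ : F))⁻¹) ∧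
    (∀ σ σ' τ : G, (q (σ + σ') + q τ - q (σ + σ' + τ))
        = (q σ + q τ - q (σ + τ)) + (q σ' + q τ - q (σ' + τ))) ∧
    (∀ σ τ τ' : G, (q σ + q (τ + τ') - q (σ + (τ + τ')))
        = (q σ + q τ - q (σ + τ)) + (q σ + q τ' - q (σ + τ'))) := by
  have sign_eq_commutator : ∀ σ τ : G,
      (-1 : F) ^ (q σ + q τ - q (σ + τ)).val = (l σ τ : F) * (l τ σ : F)⁻¹ := fun σ τ =>
    neg_one_pow_zmod_two_val_add_sub_eq_mul_inv (hθ σ τ) (l τ σ).ne_zero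
  have add_left : ∀ σ σ' τ : G, q (σ + σ') + q τ - q (σ + σ' + τ)
      = (q σ + q τ - q (σ + τ)) + (q σ' + q τ - q (σ' + τ)) := by
    intro σ σ' τ
    apply neg_one_pow_zmod_two_val_injective (R := F) (by norm_num)
    simp only [neg_one_pow_zmod_two_val_add, sign_eq_commutator, ← div_eq_mul_inv]
    exact_mod_cast congrArg Units.val (cocycle_div_swap_add_left hl σ σ' τ)
  have symm : ∀ σ τ : G, q σ + q τ - q (σ + τ) = q τ + q σ - q (τ + σ) := fun σ τ => by
    rw [add_comm σ, add_comm (q σ)]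
  refine ⟨sign_eq_commutator, add_left, fun σ τ τ' => ?_⟩
  rw [symm σ, symm σ τ, symm σ τ']
  exact add_left τ τ' σ
end

section
/- Let G be a torsion-free abelian group and A an associative unital algebra over a field F of characteristic zero such that the Jordan algebra A⁺ (with product a∘b = (ab+ba)/2) is a Jordan G-torus. Then A itself is G-graded with the same homogeneous components, i.e., A^σ A^τ ⊆ A^{σ+τ} for all σ, τ ∈ G; hence A is an associative G-torus. -/
/-!
Since `2xyx = x(xy + yx) + (xy + yx)x - (x²y + yx²)`, a grading of the Jordan product also grades
the triple products `xyx`, and then `c = xy - yx` has `c² = x(yxy) + (yxy)x - xy²x - yx²y`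
homogeneous of degree `2(σ + τ)`. Torsion-free abelian groups have two unique sums, so the
support of `c`, unless it is a singleton, has two distinct vertices: points `M` for which `M + M`
is a sum of two elements of the support only as `M + M`. At a vertex the `2M`-component of `c²`
is `c_M²`, which is nonzero because nonzero homogeneous elements are Jordan invertible; hence
`2M = 2(σ + τ)` and `M = σ + τ`. So `c` is homogeneous of degree `σ + τ`, and so is
`2xy = (xy + yx) + c`.
-/

theorem twoUniqueSums_of_isAddTorsionFree (G : Type*) [AddCommGroup G] [IsAddTorsionFree G] :
    TwoUniqueSums G :=
  .of_injective_addHom (DivisibleHull.coeAddMonoidHom G).toAddHom DivisibleHull.coe_injective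
    inferInstance

theorem UniqueAdd.left_eq_right {ι : Type*} [AddCommMagma ι] {D : Finset ι} {a b : ι}
    (h : UniqueAdd D D a b) (ha : a ∈ D) (hb : b ∈ D) : a = b :=
  (h hb ha (add_comm b a)).2

theorem Finset.subset_singleton_of_uniqueAdd_self {ι : Type*} [AddCommMagma ι] [TwoUniqueSums ι]
    {D : Finset ι} {ρ : ι} (h : ∀ M ∈ D, UniqueAdd D D M M → M = ρ) : D ⊆ {ρ} := by
  intro g hg
  rw [Finset.mem_singleton]
  by_cases hcard : D.card ≤ 1
  · obtain ⟨a, ha, b, hb, hab⟩ := UniqueAdd.of_card_le_one ⟨g, hg⟩ ⟨g, hg⟩ hcard hcard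
    rw [Finset.card_le_one.1 hcard g hg a ha]
    rw [Finset.card_le_one.1 hcard b hb a ha] at hab
    exact h a ha hab
  · have hdiag : ∀ p ∈ D ×ˢ D, UniqueAdd D D p.1 p.2 → p = (ρ, ρ) := by
      rintro ⟨a, b⟩ hab hu
      rw [Finset.mem_product] at hab
      dsimp only at hab hu
      obtain rfl := hu.left_eq_right hab.1 hab.2
      rw [h a hab.1 hu]
    obtain ⟨p, hp, q, hq, hpq, hpu, hqu⟩ :=
      TwoUniqueSums.uniqueAdd_of_one_lt_card (A := D) (B := D) (by nlinarith)
    exact absurd ((hdiag p hp hpu).trans (hdiag q hq hqu).symm) hpq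

theorem Submodule.mem_of_add_self_mem {K M : Type*} [DivisionRing K] [NeZero (2 : K)]
    [AddCommGroup M] [Module K M] (p : Submodule K M) {x : M} (hx : x + x ∈ p) : x ∈ p :=
  (p.smul_mem_iff (two_ne_zero : (2 : K) ≠ 0)).1 (by rwa [two_smul])

section JordanGraded

variable {ι F A : Type*} [Field F] [Ring A] [Algebra F A]

def IsJordanGraded [Add ι] (𝒜 : ι → Submodule F A) : Prop :=
  ∀ i j : ι, ∀ x ∈ 𝒜 i, ∀ y ∈ 𝒜 j, (2⁻¹ : F) • (x * y + y * x) ∈ 𝒜 (i + j)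

namespace IsJordanGraded

variable [AddCommMonoid ι] [NeZero (2 : F)] {𝒜 : ι → Submodule F A} (h𝒜 : IsJordanGraded 𝒜)
  {i j : ι} {x y : A}
include h𝒜

theorem mul_add_mul_mem (hx : x ∈ 𝒜 i) (hy : y ∈ 𝒜 j) : x * y + y * x ∈ 𝒜 (i + j) :=
  (Submodule.smul_mem_iff _ (inv_ne_zero two_ne_zero)).1 (h𝒜 i j x hx y hy)

theorem mul_self_mem (hx : x ∈ 𝒜 i) : x * x ∈ 𝒜 (i + i) :=
  (𝒜 _).mem_of_add_self_mem (h𝒜.mul_add_mul_mem hx hx)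

theorem sandwich_mem (hx : x ∈ 𝒜 i) (hy : y ∈ 𝒜 j) : x * y * x ∈ 𝒜 (i + i + j) := by
  refine (𝒜 _).mem_of_add_self_mem ?_
  have hxxy := h𝒜.mul_add_mul_mem hx (h𝒜.mul_add_mul_mem hx hy)
  rw [← add_assoc] at hxxy
  have key : x * y * x + x * y * x =
      (x * (x * y + y * x) + (x * y + y * x) * x) - (x * x * y + y * (x * x)) := by
    noncomm_ring
  rw [key]
  exact sub_mem hxxy (h𝒜.mul_add_mul_mem (h𝒜.mul_self_mem hx) hy)

theorem commutator_mul_self_mem (hx : x ∈ 𝒜 i) (hy : y ∈ 𝒜 j) :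
    (x * y - y * x) * (x * y - y * x) ∈ 𝒜 (i + j + (i + j)) := by
  have key : (x * y - y * x) * (x * y - y * x) =
      (x * (y * x * y) + y * x * y * x) - x * (y * y) * x - y * (x * x) * y := by
    noncomm_ring
  have e₁ : i + (j + j + i) = i + j + (i + j) := by abel
  have e₂ : i + i + (j + j) = i + j + (i + j) := by abel
  have e₃ : j + j + (i + i) = i + j + (i + j) := by abel
  rw [key]
  refine sub_mem (sub_mem ?_ ?_) ?_
  · exact e₁ ▸ h𝒜.mul_add_mul_mem hx (h𝒜.sandwich_mem hy hx)
  · exact e₂ ▸ h𝒜.sandwich_mem hx (h𝒜.mul_self_mem hy)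
  · exact e₃ ▸ h𝒜.sandwich_mem hy (h𝒜.mul_self_mem hx)

variable [DecidableEq ι] [DirectSum.Decomposition 𝒜]

theorem coe_decompose_mul_self_of_uniqueAdd [∀ (i) (x : 𝒜 i), Decidable (x ≠ 0)] {c : A} {M : ι}
    (hM : M ∈ (DirectSum.decompose 𝒜 c).support)
    (hMu : UniqueAdd (DirectSum.decompose 𝒜 c).support (DirectSum.decompose 𝒜 c).support M M) :
    (DirectSum.decompose 𝒜 (c * c) (M + M) : A) =
      DirectSum.decompose 𝒜 c M * DirectSum.decompose 𝒜 c M := by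
  set D := (DirectSum.decompose 𝒜 c).support
  set e : ι → A := fun g => DirectSum.decompose 𝒜 c g
  have he : ∀ g, e g ∈ 𝒜 g := fun g => SetLike.coe_mem _
  have hprod : ∑ p ∈ D ×ˢ D, e p.1 * e p.2 = c * c := by
    rw [Finset.sum_product, ← Finset.sum_mul_sum, DirectSum.sum_support_decompose]
  have hsym : c * c = ∑ p ∈ D ×ˢ D, (2⁻¹ : F) • (e p.1 * e p.2 + e p.2 * e p.1) := by
    have hprod' : ∑ p ∈ D ×ˢ D, e p.2 * e p.1 = c * c := by
      rw [Finset.sum_product_right, ← hprod, Finset.sum_product]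
    rw [← Finset.smul_sum, Finset.sum_add_distrib, hprod, hprod', ← two_smul F, smul_smul,
      inv_mul_cancel₀ two_ne_zero, one_smul]
  rw [hsym, DirectSum.decompose_sum, DFinsupp.finsetSum_apply, Submodule.coe_sum,
    Finset.sum_eq_single_of_mem (M, M) (Finset.mem_product.2 ⟨hM, hM⟩)]
  · rw [DirectSum.decompose_of_mem_same 𝒜 (h𝒜 M M _ (he M) _ (he M)), ← two_smul F, smul_smul,
      inv_mul_cancel₀ two_ne_zero, one_smul]
  · rintro ⟨a, b⟩ hab hne
    rw [Finset.mem_product] at hab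
    refine DirectSum.decompose_of_mem_ne 𝒜 (h𝒜 a b _ (he a) _ (he b)) fun hsum => hne ?_
    exact Prod.ext_iff.2 (hMu hab.1 hab.2 hsum)

end IsJordanGraded

theorem IsJordanGraded.mem_of_mul_self_mem [AddCommGroup ι] [IsAddTorsionFree ι] [DecidableEq ι]
    [NeZero (2 : F)] {𝒜 : ι → Submodule F A} [DirectSum.Decomposition 𝒜]
    (h𝒜 : IsJordanGraded 𝒜) (hsq : ∀ i, ∀ a ∈ 𝒜 i, a * a = 0 → a = 0)
    {c : A} {ρ : ι} (hc : c * c ∈ 𝒜 (ρ + ρ)) : c ∈ 𝒜 ρ := by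
  classical
  have := twoUniqueSums_of_isAddTorsionFree ι
  have hvertex : ∀ M ∈ (DirectSum.decompose 𝒜 c).support,
      UniqueAdd (DirectSum.decompose 𝒜 c).support (DirectSum.decompose 𝒜 c).support M M →
        M = ρ := by
    intro M hM hMu
    by_contra hne
    have hne₂ : ρ + ρ ≠ M + M := fun h =>
      hne (nsmul_right_injective two_ne_zero (by simpa only [two_nsmul] using h.symm))
    refine DFinsupp.mem_support_iff.1 hM (Subtype.ext (hsq M _ (SetLike.coe_mem _) ?_))
    rw [← h𝒜.coe_decompose_mul_self_of_uniqueAdd hM hMu]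
    exact DirectSum.decompose_of_mem_ne 𝒜 hc hne₂
  rw [← DirectSum.sum_support_decompose 𝒜 c]
  refine Submodule.sum_mem _ fun g hg => ?_
  rw [← Finset.mem_singleton.1 (Finset.subset_singleton_of_uniqueAdd_self hvertex hg)]
  exact SetLike.coe_mem _

end JordanGraded

theorem stmt9_general {G F A : Type*} [AddCommGroup G] [DecidableEq G] [Field F] [CharZero F]
    [Ring A] [Algebra F A]
    (hG : ∀ g : G, g ≠ 0 → ¬IsOfFinAddOrder g)
    (𝒜 : G → Submodule F A)
    (hinternal : DirectSum.IsInternal 𝒜)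
    -- `A⁺` is `G`-graded: the Jordan product maps `𝒜 σ × 𝒜 τ` into `𝒜 (σ+τ)`
    (hjmul : ∀ σ τ : G, ∀ x ∈ 𝒜 σ, ∀ y ∈ 𝒜 τ, (2⁻¹ : F) • (x * y + y * x) ∈ 𝒜 (σ + τ))
    -- (T2): nonzero homogeneous elements are invertible in the Jordan algebra `A⁺`
    (hinv : ∀ σ : G, ∀ x ∈ 𝒜 σ, x ≠ 0 →
      ∃ y : A, (2⁻¹ : F) • (x * y + y * x) = 1 ∧
        (2⁻¹ : F) • ((x * x) * y + y * (x * x)) = x) :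
    ∀ σ τ : G, ∀ x ∈ 𝒜 σ, ∀ y ∈ 𝒜 τ, x * y ∈ 𝒜 (σ + τ) := by
  intro σ τ x hx y hy
  have := IsAddTorsionFree.of_not_isOfFinAddOrder hG
  let := hinternal.chooseDecomposition
  have h𝒜 : IsJordanGraded 𝒜 := hjmul
  have hsq : ∀ i, ∀ a ∈ 𝒜 i, a * a = 0 → a = 0 := fun i a ha ha0 => by
    by_contra hne
    obtain ⟨b, -, hb⟩ := hinv i a ha hne
    rw [ha0, zero_mul, mul_zero, add_zero, smul_zero] at hb
    exact hne hb.symm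
  have hc := h𝒜.mem_of_mul_self_mem hsq (h𝒜.commutator_mul_self_mem hx hy)
  refine (𝒜 _).mem_of_add_self_mem ?_
  have hsplit : x * y + x * y = (x * y + y * x) + (x * y - y * x) := by noncomm_ring
  rw [hsplit]
  exact add_mem (h𝒜.mul_add_mul_mem hx hy) hc

/-- Let `G` be a torsion-free abelian group and `A` an associative unital `F`-algebra
(`char F = 0`) such that `A⁺` (with the Jordan product `a∘b = (ab+ba)/2`) is a Jordan
`G`-torus for a decomposition `𝒜` of `A`.  Then `A` itself is `G`-graded with the same
homogeneous components: `A^σ A^τ ⊆ A^{σ+τ}`; hence `A` is an associative `G`-torus. -/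
theorem stmt9 {G F A : Type*} [AddCommGroup G] [DecidableEq G] [Field F] [CharZero F]
    [Ring A] [Algebra F A]
    (hG : ∀ g : G, g ≠ 0 → ¬IsOfFinAddOrder g)
    (𝒜 : G → Submodule F A)
    (hinternal : DirectSum.IsInternal 𝒜)
    (hone : (1 : A) ∈ 𝒜 0)
    -- `A⁺` is `G`-graded: the Jordan product maps `𝒜 σ × 𝒜 τ` into `𝒜 (σ+τ)`
    (hjmul : ∀ σ τ : G, ∀ x ∈ 𝒜 σ, ∀ y ∈ 𝒜 τ, (2⁻¹ : F) • (x * y + y * x) ∈ 𝒜 (σ + τ))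
    -- (T1): the support generates `G`
    (hsupp : AddSubgroup.closure {σ : G | 𝒜 σ ≠ ⊥} = ⊤)
    -- (T3): homogeneous components have dimension at most one
    (hdim : ∀ σ : G, Module.rank F (𝒜 σ) ≤ 1)
    -- (T2): nonzero homogeneous elements are invertible in the Jordan algebra `A⁺`
    (hinv : ∀ σ : G, ∀ x ∈ 𝒜 σ, x ≠ 0 →
      ∃ y : A, (2⁻¹ : F) • (x * y + y * x) = 1 ∧
        (2⁻¹ : F) • ((x * x) * y + y * (x * x)) = x) :
    ∀ σ τ : G, ∀ x ∈ 𝒜 σ, ∀ y ∈ 𝒜 τ, x * y ∈ 𝒜 (σ + τ) :=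
  stmt9_general hG 𝒜 hinternal hjmul hinv
end

section
/- Let G be an abelian group, S a pointed reflection subspace of G and Γ a subgroup of G such that 2G ⊆ Γ ⊊ S ⊆ G and S + Γ = S. Let Z = F[Γ] be the group algebra of Γ, let I be a set of coset representatives for the nontrivial cosets {σ+Γ : σ ∈ S}∖{Γ}, and let V be the free Z-module with basis {t_ε}_{ε∈I}. Fix scalars a_ε ∈ F^× and define the Z-bilinear form f on V by f(t_ε, t_η) = a_ε z^{2ε} if ε = η and 0 otherwise. Then the Jordan algebra J = Z ⊕ V of the bilinear form f, graded by J_σ = F z^{σ−ε_σ} t_{ε_σ} for σ ∈ S (where ε_σ ∈ I∪{0} is the unique element with σ − ε_σ ∈ Γ, and t_0 = 1) and J_σ = 0 otherwise, satisfies J_σ J_τ ⊆ J_{σ+τ} for all σ, τ ∈ G; hence J is a G-graded Jordan algebra with supp(J) = S. -/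
/-!
Each `J_σ` is spanned by the monomials `z^σ` (when `σ ∈ Γ`) and `z^{σ-ε} t_ε` (when
`σ - ε ∈ Γ`), and the product of `J` is `F`-bilinear, so it suffices to multiply monomials:
`z^γ z^{γ'} = z^{γ+γ'}`, `z^γ · z^{γ'} t_ε = z^{γ+γ'} t_ε`, and
`z^γ t_ε · z^{γ'} t_η = δ_{εη} a_ε z^{γ+γ'+2ε}`; in each case the degrees add.
A monomial is never zero, so `J_σ ≠ 0` exactly when `σ ∈ Γ ∪ ⋃_ε (ε + Γ)`, and this union
is `S` because `Γ ⊆ S = S + Γ` and `I` represents the cosets of `Γ` in `S ∖ Γ`.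
-/

noncomputable section
open Classical

variable {G F : Type*} [AddCommGroup G] [Field F] [CharZero F]

/-- The symmetric `Z`-bilinear form `f` on the free `Z = F[Γ]`-module `V` with basis
`{t_ε}_{ε ∈ I}`, given by `f(t_ε, t_ε) = a_ε z^{2ε}` and `f(t_ε, t_η) = 0` for `ε ≠ η`. -/
def cliffordForm (Γ : AddSubgroup G) {I : Type*} (e : I → G)
    (h2 : ∀ ε : I, e ε + e ε ∈ Γ) (a : I → Fˣ)
    (v w : I →₀ AddMonoidAlgebra F Γ) : AddMonoidAlgebra F Γ :=
  v.sum fun ε z =>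
    z * w ε * ((a ε : F) • AddMonoidAlgebra.single (⟨e ε + e ε, h2 ε⟩ : Γ) (1 : F))

/-- The multiplication of the Jordan algebra `J = Z ⊕ V` of the bilinear form `f`:
`(z, v)(z', v') = (zz' + f(v,v'), z v' + z' v)`. -/
def cliffordMul (Γ : AddSubgroup G) {I : Type*} (e : I → G)
    (h2 : ∀ ε : I, e ε + e ε ∈ Γ) (a : I → Fˣ)
    (p q : AddMonoidAlgebra F Γ × (I →₀ AddMonoidAlgebra F Γ)) :
    AddMonoidAlgebra F Γ × (I →₀ AddMonoidAlgebra F Γ) :=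
  (p.1 * q.1 + cliffordForm Γ e h2 a p.2 q.2, p.1 • q.2 + q.1 • p.2)

/-- The homogeneous component `J_σ`: for `σ ∈ Γ` it is `F z^σ` (with `t_0 = 1`), and
for `σ` with `σ - ε ∈ Γ` for some coset representative `ε ∈ I` it is
`F z^{σ-ε} t_ε`; it is `0` otherwise. -/
def cliffordGrade (Γ : AddSubgroup G) {I : Type*} (e : I → G) (σ : G) :
    Submodule F (AddMonoidAlgebra F Γ × (I →₀ AddMonoidAlgebra F Γ)) :=
  (if hσ : σ ∈ Γ then
      Submodule.span F {((AddMonoidAlgebra.single (⟨σ, hσ⟩ : Γ) (1 : F),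
        (0 : I →₀ AddMonoidAlgebra F Γ)))}
    else ⊥) ⊔
  ⨆ p : {ε : I // σ - e ε ∈ Γ},
    Submodule.span F {(((0 : AddMonoidAlgebra F Γ),
      Finsupp.single p.1 (AddMonoidAlgebra.single (⟨σ - e p.1, p.2⟩ : Γ) (1 : F))))}

section Grading

omit [CharZero F]

variable (Γ : AddSubgroup G) {I : Type*} (e : I → G) (h2 : ∀ ε : I, e ε + e ε ∈ Γ) (a : I → Fˣ)

lemma cliffordForm_add_left (v₁ v₂ w : I →₀ AddMonoidAlgebra F Γ) :
    cliffordForm Γ e h2 a (v₁ + v₂) w =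
      cliffordForm Γ e h2 a v₁ w + cliffordForm Γ e h2 a v₂ w := by
  unfold cliffordForm
  rw [Finsupp.sum_add_index'] <;> intros <;> simp [add_mul]

lemma cliffordForm_smul_left (r : F) (v w : I →₀ AddMonoidAlgebra F Γ) :
    cliffordForm Γ e h2 a (r • v) w = r • cliffordForm Γ e h2 a v w := by
  unfold cliffordForm
  rw [Finsupp.sum_smul_index' (by simp), Finsupp.smul_sum]
  simp only [smul_mul_assoc]

lemma cliffordForm_add_right (v w₁ w₂ : I →₀ AddMonoidAlgebra F Γ) :
    cliffordForm Γ e h2 a v (w₁ + w₂) =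
      cliffordForm Γ e h2 a v w₁ + cliffordForm Γ e h2 a v w₂ := by
  unfold cliffordForm
  rw [← Finsupp.sum_add]
  simp only [Finsupp.add_apply, mul_add, add_mul]

lemma cliffordForm_smul_right (r : F) (v w : I →₀ AddMonoidAlgebra F Γ) :
    cliffordForm Γ e h2 a v (r • w) = r • cliffordForm Γ e h2 a v w := by
  unfold cliffordForm
  rw [Finsupp.smul_sum]
  simp only [Finsupp.smul_apply, mul_smul_comm, smul_mul_assoc, smul_comm r]

lemma cliffordForm_single_single (ε η : I) (z₁ z₂ : AddMonoidAlgebra F Γ) :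
    cliffordForm Γ e h2 a (Finsupp.single ε z₁) (Finsupp.single η z₂) =
      if ε = η then
        z₁ * z₂ * ((a ε : F) • AddMonoidAlgebra.single (⟨e ε + e ε, h2 ε⟩ : Γ) (1 : F))
      else 0 := by
  unfold cliffordForm
  rw [Finsupp.sum_single_index (by simp)]
  split_ifs with h
  · subst h; simp
  · simp [Ne.symm h]

def cliffordMulBilin :
    (AddMonoidAlgebra F Γ × (I →₀ AddMonoidAlgebra F Γ)) →ₗ[F]
      (AddMonoidAlgebra F Γ × (I →₀ AddMonoidAlgebra F Γ)) →ₗ[F]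
        AddMonoidAlgebra F Γ × (I →₀ AddMonoidAlgebra F Γ) :=
  LinearMap.mk₂ F (cliffordMul Γ e h2 a)
    (fun p₁ p₂ q => by
      refine Prod.ext ?_ ?_
      · simp only [cliffordMul, Prod.fst_add, Prod.snd_add, cliffordForm_add_left, add_mul]; abel
      · simp only [cliffordMul, Prod.fst_add, Prod.snd_add, add_smul, smul_add]; abel)
    (fun r p q => by
      refine Prod.ext ?_ ?_
      · simp [cliffordMul, cliffordForm_smul_left, smul_add]
      · simp [cliffordMul, smul_add, smul_comm r q.1])
    (fun p q₁ q₂ => by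
      refine Prod.ext ?_ ?_
      · simp only [cliffordMul, Prod.fst_add, Prod.snd_add, cliffordForm_add_right, mul_add]; abel
      · simp only [cliffordMul, Prod.fst_add, Prod.snd_add, add_smul, smul_add]; abel)
    (fun r p q => by
      refine Prod.ext ?_ ?_
      · simp [cliffordMul, cliffordForm_smul_right, smul_add]
      · simp [cliffordMul, smul_add, smul_comm r p.1])

/-- `z^γ`, as an element of `J = Z ⊕ V`. -/
def cliffordScalar (γ : Γ) : AddMonoidAlgebra F Γ × (I →₀ AddMonoidAlgebra F Γ) :=
  (AddMonoidAlgebra.single γ 1, 0)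

/-- `z^γ t_ε`, as an element of `J = Z ⊕ V`. -/
def cliffordVector (ε : I) (γ : Γ) : AddMonoidAlgebra F Γ × (I →₀ AddMonoidAlgebra F Γ) :=
  (0, Finsupp.single ε (AddMonoidAlgebra.single γ 1))

lemma cliffordMul_scalar_scalar (γ γ' : Γ) :
    cliffordMul Γ e h2 a (cliffordScalar Γ γ) (cliffordScalar Γ γ') =
      (cliffordScalar Γ (γ + γ') : AddMonoidAlgebra F Γ × (I →₀ AddMonoidAlgebra F Γ)) := by
  simp [cliffordMul, cliffordScalar, cliffordForm, AddMonoidAlgebra.single_mul_single]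

lemma cliffordMul_scalar_vector (γ γ' : Γ) (ε : I) :
    cliffordMul Γ e h2 a (cliffordScalar Γ γ) (cliffordVector Γ ε γ') =
      (cliffordVector Γ ε (γ + γ') : AddMonoidAlgebra F Γ × (I →₀ AddMonoidAlgebra F Γ)) := by
  simp [cliffordMul, cliffordScalar, cliffordVector, cliffordForm, Finsupp.smul_single,
    AddMonoidAlgebra.single_mul_single]

lemma cliffordMul_vector_scalar (ε : I) (γ γ' : Γ) :
    cliffordMul Γ e h2 a (cliffordVector Γ ε γ) (cliffordScalar Γ γ') =
      (cliffordVector Γ ε (γ + γ') : AddMonoidAlgebra F Γ × (I →₀ AddMonoidAlgebra F Γ)) := by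
  simp [cliffordMul, cliffordScalar, cliffordVector, cliffordForm, Finsupp.smul_single,
    AddMonoidAlgebra.single_mul_single, add_comm γ']

lemma cliffordMul_vector_vector (ε η : I) (γ γ' : Γ) :
    cliffordMul Γ e h2 a (cliffordVector Γ ε γ) (cliffordVector Γ η γ') =
      if ε = η then (a ε : F) • cliffordScalar Γ (γ + γ' + ⟨e ε + e ε, h2 ε⟩) else 0 := by
  simp only [cliffordMul, cliffordVector, cliffordForm_single_single]
  split_ifs
  · simp [cliffordScalar, AddMonoidAlgebra.single_mul_single]
  · simp

def cliffordMonomials (σ : G) : Set (AddMonoidAlgebra F Γ × (I →₀ AddMonoidAlgebra F Γ)) :=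
  {x | ∃ γ : Γ, (γ : G) = σ ∧ x = cliffordScalar Γ γ} ∪
    {x | ∃ (ε : I) (γ : Γ), (γ : G) = σ - e ε ∧ x = cliffordVector Γ ε γ}

lemma cliffordScalar_mem_cliffordGrade {σ : G} (γ : Γ) (hγ : (γ : G) = σ) :
    cliffordScalar Γ γ ∈ cliffordGrade (F := F) Γ e σ := by
  subst hγ
  refine Submodule.mem_sup_left ?_
  rw [dif_pos γ.2]
  exact Submodule.subset_span rfl

lemma cliffordVector_mem_cliffordGrade {σ : G} (ε : I) (γ : Γ) (hγ : (γ : G) = σ - e ε) :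
    cliffordVector Γ ε γ ∈ cliffordGrade (F := F) Γ e σ := by
  obtain ⟨γ, hγΓ⟩ := γ
  subst hγ
  exact Submodule.mem_sup_right (Submodule.mem_iSup_of_mem ⟨ε, hγΓ⟩ (Submodule.subset_span rfl))

lemma cliffordGrade_eq_span (σ : G) :
    cliffordGrade (F := F) Γ e σ = Submodule.span F (cliffordMonomials Γ e σ) := by
  refine le_antisymm (sup_le ?_ (iSup_le fun p => ?_)) (Submodule.span_le.mpr ?_)
  · split_ifs with hσ
    · exact Submodule.span_mono (Set.singleton_subset_iff.mpr (Or.inl ⟨⟨σ, hσ⟩, rfl, rfl⟩))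
    · exact bot_le
  · exact Submodule.span_mono
      (Set.singleton_subset_iff.mpr (Or.inr ⟨p.1, ⟨σ - e p.1, p.2⟩, rfl, rfl⟩))
  · rintro x (⟨γ, hγ, rfl⟩ | ⟨ε, γ, hγ, rfl⟩)
    · exact cliffordScalar_mem_cliffordGrade Γ e γ hγ
    · exact cliffordVector_mem_cliffordGrade Γ e ε γ hγ

lemma cliffordMul_mem_cliffordGrade_of_mem_cliffordMonomials {σ τ : G}
    {x y : AddMonoidAlgebra F Γ × (I →₀ AddMonoidAlgebra F Γ)}
    (hx : x ∈ cliffordMonomials Γ e σ) (hy : y ∈ cliffordMonomials Γ e τ) :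
    cliffordMul Γ e h2 a x y ∈ cliffordGrade (F := F) Γ e (σ + τ) := by
  rcases hx with ⟨γ, hγ, rfl⟩ | ⟨ε, γ, hγ, rfl⟩ <;>
    rcases hy with ⟨γ', hγ', rfl⟩ | ⟨η, γ', hγ', rfl⟩
  · rw [cliffordMul_scalar_scalar]
    exact cliffordScalar_mem_cliffordGrade Γ e _ (by push_cast; rw [hγ, hγ'])
  · rw [cliffordMul_scalar_vector]
    exact cliffordVector_mem_cliffordGrade Γ e η _ (by push_cast; rw [hγ, hγ']; abel)
  · rw [cliffordMul_vector_scalar]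
    exact cliffordVector_mem_cliffordGrade Γ e ε _ (by push_cast; rw [hγ, hγ']; abel)
  · rw [cliffordMul_vector_vector]
    split_ifs with hεη
    · subst hεη
      exact Submodule.smul_mem _ _
        (cliffordScalar_mem_cliffordGrade Γ e _ (by push_cast; rw [hγ, hγ']; abel))
    · exact zero_mem _

theorem cliffordMul_mem_cliffordGrade {σ τ : G}
    {x y : AddMonoidAlgebra F Γ × (I →₀ AddMonoidAlgebra F Γ)}
    (hx : x ∈ cliffordGrade (F := F) Γ e σ) (hy : y ∈ cliffordGrade (F := F) Γ e τ) :
    cliffordMul Γ e h2 a x y ∈ cliffordGrade (F := F) Γ e (σ + τ) := by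
  have hle : Submodule.map₂ (cliffordMulBilin Γ e h2 a)
      (cliffordGrade Γ e σ) (cliffordGrade Γ e τ) ≤ cliffordGrade Γ e (σ + τ) := by
    rw [cliffordGrade_eq_span Γ e σ, cliffordGrade_eq_span Γ e τ, Submodule.map₂_span_span,
      Submodule.span_le]
    rintro _ ⟨x, hx, y, hy, rfl⟩
    exact cliffordMul_mem_cliffordGrade_of_mem_cliffordMonomials Γ e h2 a hx hy
  exact hle (Submodule.apply_mem_map₂ _ hx hy)

lemma cliffordScalar_ne_zero (γ : Γ) :
    (cliffordScalar Γ γ : AddMonoidAlgebra F Γ × (I →₀ AddMonoidAlgebra F Γ)) ≠ 0 := by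
  simp [cliffordScalar]

lemma cliffordVector_ne_zero (ε : I) (γ : Γ) :
    (cliffordVector Γ ε γ : AddMonoidAlgebra F Γ × (I →₀ AddMonoidAlgebra F Γ)) ≠ 0 := by
  simp [cliffordVector]

theorem cliffordGrade_ne_bot_iff (σ : G) :
    cliffordGrade (F := F) Γ e σ ≠ ⊥ ↔ σ ∈ Γ ∨ ∃ ε : I, σ - e ε ∈ Γ := by
  rw [cliffordGrade_eq_span, Ne, Submodule.span_eq_bot]
  push Not
  constructor
  · rintro ⟨_, ⟨γ, hγ, rfl⟩ | ⟨ε, γ, hγ, rfl⟩, -⟩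
    · exact Or.inl (hγ ▸ γ.2)
    · exact Or.inr ⟨ε, hγ ▸ γ.2⟩
  · rintro (hσ | ⟨ε, hε⟩)
    · exact ⟨_, Or.inl ⟨⟨σ, hσ⟩, rfl, rfl⟩, cliffordScalar_ne_zero Γ _⟩
    · exact ⟨_, Or.inr ⟨ε, ⟨σ - e ε, hε⟩, rfl, rfl⟩, cliffordVector_ne_zero Γ ε _⟩

end Grading

theorem stmt11_general (S : Set G) (Γ : AddSubgroup G)
    -- `2G ⊆ Γ ⊊ S` and `S + Γ = S`
    (hΓS : (Γ : Set G) ⊂ S)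
    (hSΓ : ∀ σ ∈ S, ∀ γ ∈ Γ, σ + γ ∈ S)
    {I : Type*} (e : I → G) (a : I → Fˣ)
    -- `e` enumerates coset representatives of the nontrivial cosets of `Γ` in `S`
    (heS : ∀ ε : I, e ε ∈ S)
    (hrep : ∀ σ ∈ S, σ ∉ Γ → ∃! ε : I, σ - e ε ∈ Γ)
    (h2 : ∀ ε : I, e ε + e ε ∈ Γ) :
    (∀ σ τ : G, ∀ x ∈ cliffordGrade (F := F) Γ e σ, ∀ y ∈ cliffordGrade (F := F) Γ e τ,
        cliffordMul Γ e h2 a x y ∈ cliffordGrade (F := F) Γ e (σ + τ)) ∧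
    (∀ σ : G, cliffordGrade (F := F) Γ e σ ≠ ⊥ ↔ σ ∈ S) := by
  refine ⟨fun σ τ x hx y hy => cliffordMul_mem_cliffordGrade Γ e h2 a hx hy, fun σ => ?_⟩
  rw [cliffordGrade_ne_bot_iff]
  constructor
  · rintro (hσ | ⟨ε, hε⟩)
    · exact hΓS.1 hσ
    · simpa using hSΓ (e ε) (heS ε) (σ - e ε) hε
  · intro hσ
    by_cases hσΓ : σ ∈ Γ
    · exact Or.inl hσΓ
    · exact Or.inr (hrep σ hσ hσΓ).exists

/-- Let `S` be a pointed reflection subspace of `G` and `Γ ≤ G` with `2G ⊆ Γ ⊊ S ⊆ G`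
and `S + Γ = S`.  With `I` a set of coset representatives for the nontrivial cosets of
`Γ` in `S` and scalars `a_ε ∈ F^×`, the Jordan algebra `J = Z ⊕ V` of the bilinear form
`f` satisfies `J_σ J_τ ⊆ J_{σ+τ}` for all `σ, τ ∈ G`; hence `J` is a `G`-graded Jordan
algebra with `supp J = S`. -/
theorem stmt11 (S : Set G) (Γ : AddSubgroup G)
    -- `S` is a pointed reflection subspace of `G`
    (hS0 : (0 : G) ∈ S) (hSrefl : ∀ s ∈ S, ∀ t ∈ S, s - 2 • t ∈ S)
    (hSgen : AddSubgroup.closure S = ⊤)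
    -- `2G ⊆ Γ ⊊ S` and `S + Γ = S`
    (h2G : ∀ g : G, g + g ∈ Γ)
    (hΓS : (Γ : Set G) ⊂ S)
    (hSΓ : ∀ σ ∈ S, ∀ γ ∈ Γ, σ + γ ∈ S)
    {I : Type*} (e : I → G) (a : I → Fˣ)
    -- `e` enumerates coset representatives of the nontrivial cosets of `Γ` in `S`
    (heS : ∀ ε : I, e ε ∈ S) (heΓ : ∀ ε : I, e ε ∉ Γ)
    (hrep : ∀ σ ∈ S, σ ∉ Γ → ∃! ε : I, σ - e ε ∈ Γ)
    (h2 : ∀ ε : I, e ε + e ε ∈ Γ) :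
    (∀ σ τ : G, ∀ x ∈ cliffordGrade (F := F) Γ e σ, ∀ y ∈ cliffordGrade (F := F) Γ e τ,
        cliffordMul Γ e h2 a x y ∈ cliffordGrade (F := F) Γ e (σ + τ)) ∧
    (∀ σ : G, cliffordGrade (F := F) Γ e σ ≠ ⊥ ↔ σ ∈ S) :=
  stmt11_general S Γ hΓS hSΓ e a heS hrep h2
end
end

section
/- Let G be a torsion-free abelian group, F a field of characteristic zero containing a primitive third root of unity q, and Γ ≤ G a subgroup with 3G ⊆ Γ and |G/Γ| = 9. Fix σ₁, σ₂ ∈ G whose images form a basis of G/Γ over the field of 3 elements, and let μ : Γ × Γ → F^× be a symmetric 2-cocycle. Then the map λ : G × G → F^× defined by λ(iσ₁+jσ₂+γ, i'σ₁+j'σ₂+γ') = q^{ji'} · μ(η(i+i')σ₁, η(j+j')σ₂) · μ(γ,γ') · μ(η(i+i')σ₁ + η(j+j')σ₂, γ+γ') for 0 ≤ i,j,i',j' ≤ 2 and γ, γ' ∈ Γ, is a 2-cocycle on G. -/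
/-!
For a symmetric 2-cocycle `μ` on `Γ`, the product `∏ₖ μ(a₁ + ⋯ + aₖ₋₁, aₖ)` along the partial
sums of a list depends only on the multiset `{a₁, …, aₙ}` (`IsSymmetricCocycle.multisetProd`);
it behaves like `e(a₁)⋯e(aₙ) / e(a₁ + ⋯ + aₙ)` for a section `e` of the abelian extension defined
by `μ`. Up to the constant `μ 0 0`, the `μ`-part of `λ(x, y)` is this product over
`{δ₁, δ₂, γ, γ'}`, where `δ₁ = η(i+i')σ₁` and `δ₂ = η(j+j')σ₂` are the carries of `x + y`.
Both sides of the cocycle identity then become the product over the three `Γ`-components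
together with the four carries, and the carries agree as multisets because
`{η(i+i'), η(ε(i+i')+i'')} = {η(i'+i''), η(i+ε(i'+i''))}` for `0 ≤ i, i', i'' ≤ 2`.
The factor `q^{ji'}` is a cocycle since `(j, i') ↦ ji' mod 3` is bilinear.
-/

/-- `η(n) = n − (n mod 3)`. -/
def etaN (n : ℕ) : ℕ := n - n % 3

section PartialSumProd

variable {A C : Type*} [AddCommMonoid A] [CommMonoid C]

structure IsSymmetricCocycle (μ : A → A → C) : Prop where
  symm : ∀ a b, μ a b = μ b a
  cocycle : ∀ a b c, μ (a + b) c * μ a b = μ a (b + c) * μ b c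

def partialSumProd (μ : A → A → C) : A → List A → C
  | _, [] => 1
  | s, a :: l => μ s a * partialSumProd μ (s + a) l

theorem partialSumProd_append (μ : A → A → C) (s : A) (l₁ l₂ : List A) :
    partialSumProd μ s (l₁ ++ l₂) = partialSumProd μ s l₁ * partialSumProd μ (s + l₁.sum) l₂ := by
  induction l₁ generalizing s with
  | nil => simp [partialSumProd]
  | cons a l ih => simp [partialSumProd, ih, add_assoc, mul_assoc]

namespace IsSymmetricCocycle

variable {μ : A → A → C}

theorem partialSumProd_perm (hμ : IsSymmetricCocycle μ) {l₁ l₂ : List A} (h : l₁.Perm l₂) (s : A) :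
    partialSumProd μ s l₁ = partialSumProd μ s l₂ := by
  induction h generalizing s with
  | nil => rfl
  | cons a _ ih => simp only [partialSumProd, ih]
  | swap a b l =>
    have hswap : μ s b * μ (s + b) a = μ s a * μ (s + a) b := by
      rw [mul_comm, hμ.cocycle, add_comm b a, hμ.symm b a, ← hμ.cocycle, mul_comm]
    simp only [partialSumProd, ← mul_assoc, hswap, add_right_comm s b a]
  | trans _ _ ih₁ ih₂ => rw [ih₁, ih₂]

def multisetProd (hμ : IsSymmetricCocycle μ) : Multiset A → C :=
  Quot.lift (partialSumProd μ 0) fun _ _ h => hμ.partialSumProd_perm h 0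

end IsSymmetricCocycle

end PartialSumProd

namespace IsSymmetricCocycle

variable {A C : Type*} [AddCommMonoid A] [CancelCommMonoid C] {μ : A → A → C}

theorem zero_left (hμ : IsSymmetricCocycle μ) (a : A) : μ 0 a = μ 0 0 := by
  simpa using (hμ.cocycle 0 0 a).symm

theorem multisetProd_add_mul (hμ : IsSymmetricCocycle μ) (s t : Multiset A) :
    hμ.multisetProd (s + t) * μ 0 0 = hμ.multisetProd s * hμ.multisetProd (s.sum ::ₘ t) := by
  induction s using Quot.inductionOn with | h l₁ =>
  induction t using Quot.inductionOn with | h l₂ =>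
  change partialSumProd μ 0 (l₁ ++ l₂) * μ 0 0 =
    partialSumProd μ 0 l₁ * partialSumProd μ 0 (l₁.sum :: l₂)
  rw [partialSumProd_append, partialSumProd, hμ.zero_left l₁.sum, zero_add]
  ac_rfl

theorem multisetProd_four (hμ : IsSymmetricCocycle μ) (d₁ d₂ g g' : A) :
    hμ.multisetProd {d₁, d₂, g, g'} = μ 0 0 * (μ d₁ d₂ * μ g g' * μ (d₁ + d₂) (g + g')) := by
  change partialSumProd μ 0 [d₁, d₂, g, g'] = _
  simp only [partialSumProd, zero_add, mul_one]
  rw [hμ.zero_left, mul_assoc (μ d₁ d₂), mul_comm (μ g g'), ← hμ.cocycle, mul_comm (μ _ g)]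

theorem multisetProd_mul_multisetProd (hμ : IsSymmetricCocycle μ) (a b c d g₁ g₂ g₃ : A) :
    hμ.multisetProd {c, d, a + b + g₁ + g₂, g₃} * hμ.multisetProd {a, b, g₁, g₂} =
      hμ.multisetProd ({a, b, g₁, g₂} + {c, d, g₃}) * μ 0 0 := by
  have hsum : ({a, b, g₁, g₂} : Multiset A).sum = a + b + g₁ + g₂ := by simp [add_assoc]
  rw [hμ.multisetProd_add_mul, hsum, mul_comm]
  congr 2
  simp only [Multiset.insert_eq_cons]
  rw [Multiset.cons_swap d, Multiset.cons_swap c]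

end IsSymmetricCocycle

section Carry

variable {G : Type*} [AddCommGroup G] {Γ : AddSubgroup G}

def carry (h3 : ∀ g : G, (3 : ℕ) • g ∈ Γ) (σ : G) (n : ℕ) : Γ :=
  (n / 3) • ⟨(3 : ℕ) • σ, h3 σ⟩

variable (h3 : ∀ g : G, (3 : ℕ) • g ∈ Γ)

theorem coe_carry (σ : G) (n : ℕ) : (carry h3 σ n : G) = etaN n • σ := by
  rw [carry, AddSubgroup.coe_nsmul, smul_smul]
  congr 1
  simp only [etaN]
  omega

theorem nsmul_eq_mod_add_etaN (n : ℕ) (g : G) : n • g = (n % 3) • g + etaN n • g := by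
  rw [← add_nsmul]
  congr 1
  simp only [etaN]
  omega

theorem canonical_add_canonical (σ₁ σ₂ : G) (i j i' j' : ℕ) (γ γ' : Γ) :
    (i • σ₁ + j • σ₂ + (γ : G)) + (i' • σ₁ + j' • σ₂ + (γ' : G)) =
      ((i + i') % 3) • σ₁ + ((j + j') % 3) • σ₂ +
        ((carry h3 σ₁ (i + i') + carry h3 σ₂ (j + j') + γ + γ' : Γ) : G) := by
  calc _ = (i + i') • σ₁ + (j + j') • σ₂ + ((γ : G) + γ') := by rw [add_nsmul, add_nsmul]; abel
    _ = _ := by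
      rw [nsmul_eq_mod_add_etaN (i + i'), nsmul_eq_mod_add_etaN (j + j')]
      push_cast [coe_carry]
      abel

theorem carry_pair_assoc (σ : G) {i i' i'' : ℕ} (hi : i ≤ 2) (hi' : i' ≤ 2) (hi'' : i'' ≤ 2) :
    ({carry h3 σ (i + i'), carry h3 σ ((i + i') % 3 + i'')} : Multiset Γ) =
      {carry h3 σ (i' + i''), carry h3 σ (i + (i' + i'') % 3)} := by
  have key : ({(i + i') / 3, ((i + i') % 3 + i'') / 3} : Multiset ℕ) =
      {(i' + i'') / 3, (i + (i' + i'') % 3) / 3} := by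
    interval_cases i <;> interval_cases i' <;> interval_cases i'' <;> decide
  have := congrArg (Multiset.map fun m : ℕ => m • (⟨(3 : ℕ) • σ, h3 σ⟩ : Γ)) key
  simp only [Multiset.insert_eq_cons, Multiset.map_cons, Multiset.map_singleton] at this
  exact this

end Carry

section LamFormula

variable {G C : Type*} [AddCommGroup G] [CancelCommMonoid C] {Γ : AddSubgroup G}
  (h3 : ∀ g : G, (3 : ℕ) • g ∈ Γ) (σ₁ σ₂ : G)

/-- The paper's `λ(iσ₁ + jσ₂ + γ, i'σ₁ + j'σ₂ + γ')`. -/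
def lamFormula (q : C) (μ : Γ → Γ → C) (i j : ℕ) (γ : Γ) (i' j' : ℕ) (γ' : Γ) : C :=
  q ^ (j * i') * μ (carry h3 σ₁ (i + i')) (carry h3 σ₂ (j + j')) * μ γ γ' *
    μ (carry h3 σ₁ (i + i') + carry h3 σ₂ (j + j')) (γ + γ')

theorem lamFormula_mul_apply_zero_zero (q : C) {μ : Γ → Γ → C} (hμ : IsSymmetricCocycle μ)
    (i j : ℕ) (γ : Γ) (i' j' : ℕ) (γ' : Γ) :
    lamFormula h3 σ₁ σ₂ q μ i j γ i' j' γ' * μ 0 0 =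
      q ^ (j * i') * hμ.multisetProd {carry h3 σ₁ (i + i'), carry h3 σ₂ (j + j'), γ, γ'} := by
  rw [hμ.multisetProd_four, lamFormula]
  ac_rfl

theorem pow_bilinear_cocycle {q : C} (hq : q ^ 3 = 1) (i₂ i₃ j₁ j₂ : ℕ) :
    q ^ ((j₁ + j₂) % 3 * i₃) * q ^ (j₁ * i₂) = q ^ (j₁ * ((i₂ + i₃) % 3)) * q ^ (j₂ * i₃) := by
  rw [← pow_add, ← pow_add, pow_eq_pow_iff_modEq]
  refine Nat.ModEq.of_dvd (orderOf_dvd_of_pow_eq_one hq) ?_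
  rw [← ZMod.natCast_eq_natCast_iff]
  push_cast [ZMod.natCast_mod]
  ring

theorem lamFormula_cocycle {q : C} (hq : q ^ 3 = 1) {μ : Γ → Γ → C} (hμ : IsSymmetricCocycle μ)
    {i₁ j₁ i₂ j₂ i₃ j₃ : ℕ} (hi₁ : i₁ ≤ 2) (hj₁ : j₁ ≤ 2) (hi₂ : i₂ ≤ 2) (hj₂ : j₂ ≤ 2)
    (hi₃ : i₃ ≤ 2) (hj₃ : j₃ ≤ 2) (γ₁ γ₂ γ₃ : Γ) :
    lamFormula h3 σ₁ σ₂ q μ ((i₁ + i₂) % 3) ((j₁ + j₂) % 3)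
        (carry h3 σ₁ (i₁ + i₂) + carry h3 σ₂ (j₁ + j₂) + γ₁ + γ₂) i₃ j₃ γ₃ *
      lamFormula h3 σ₁ σ₂ q μ i₁ j₁ γ₁ i₂ j₂ γ₂ =
    lamFormula h3 σ₁ σ₂ q μ i₁ j₁ γ₁ ((i₂ + i₃) % 3) ((j₂ + j₃) % 3)
        (carry h3 σ₁ (i₂ + i₃) + carry h3 σ₂ (j₂ + j₃) + γ₂ + γ₃) *
      lamFormula h3 σ₁ σ₂ q μ i₂ j₂ γ₂ i₃ j₃ γ₃ := by
  have hA := carry_pair_assoc h3 σ₁ hi₁ hi₂ hi₃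
  have hB := carry_pair_assoc h3 σ₂ hj₁ hj₂ hj₃
  set δA := carry h3 σ₁ (i₁ + i₂)
  set δB := carry h3 σ₂ (j₁ + j₂)
  set δC := carry h3 σ₁ (i₂ + i₃)
  set δD := carry h3 σ₂ (j₂ + j₃)
  set δA' := carry h3 σ₁ ((i₁ + i₂) % 3 + i₃)
  set δB' := carry h3 σ₂ ((j₁ + j₂) % 3 + j₃)
  set δC' := carry h3 σ₁ (i₁ + (i₂ + i₃) % 3)
  set δD' := carry h3 σ₂ (j₁ + (j₂ + j₃) % 3)
  have hcarries : ({δA, δB, γ₁, γ₂} + {δA', δB', γ₃} : Multiset Γ) =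
      {δC, δD, γ₂, γ₃} + {δC', δD', γ₁} := by
    simp only [Multiset.insert_eq_cons, ← Multiset.singleton_add] at hA hB ⊢
    calc _ = {γ₁} + {γ₂} + {γ₃} + ({δA} + {δA'}) + ({δB} + {δB'}) := by abel
      _ = {γ₁} + {γ₂} + {γ₃} + ({δC} + {δC'}) + ({δD} + {δD'}) := by rw [hA, hB]
      _ = _ := by abel
  have hsplit := lamFormula_mul_apply_zero_zero h3 σ₁ σ₂ q hμ
  refine mul_right_cancel (b := μ 0 0 * μ 0 0) ?_
  calc _ = q ^ ((j₁ + j₂) % 3 * i₃) * q ^ (j₁ * i₂) *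
        (hμ.multisetProd {δA', δB', δA + δB + γ₁ + γ₂, γ₃} * hμ.multisetProd {δA, δB, γ₁, γ₂}) := by
        rw [mul_mul_mul_comm, hsplit, hsplit, mul_mul_mul_comm]
    _ = q ^ (j₁ * ((i₂ + i₃) % 3)) * q ^ (j₂ * i₃) *
        (hμ.multisetProd {δC', δD', δC + δD + γ₂ + γ₃, γ₁} * hμ.multisetProd {δC, δD, γ₂, γ₃}) := by
        rw [hμ.multisetProd_mul_multisetProd, hμ.multisetProd_mul_multisetProd, hcarries,
          pow_bilinear_cocycle hq]
    _ = _ := by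
        symm
        rw [mul_mul_mul_comm, hsplit, hsplit, mul_mul_mul_comm, Multiset.pair_comm γ₁]

end LamFormula

theorem stmt14_general {G F : Type*} [AddCommGroup G] [Field F]
    (Γ : AddSubgroup G) (h3 : ∀ g : G, (3 : ℕ) • g ∈ Γ)
    (σ₁ σ₂ : G)
    (hbasis : ∀ σ : G, ∃! t : ℕ × ℕ × Γ, t.1 ≤ 2 ∧ t.2.1 ≤ 2 ∧
      σ = t.1 • σ₁ + t.2.1 • σ₂ + (t.2.2 : G))
    (q : Fˣ) (hq3 : q ^ 3 = 1)
    (μ : Γ → Γ → Fˣ)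
    (hμsymm : ∀ γ γ' : Γ, μ γ γ' = μ γ' γ)
    (hμcoc : ∀ γ γ' γ'' : Γ, μ (γ + γ') γ'' * μ γ γ' = μ γ (γ' + γ'') * μ γ' γ'')
    (lam : G → G → Fˣ)
    (hlam : ∀ i j i' j' : ℕ, i ≤ 2 → j ≤ 2 → i' ≤ 2 → j' ≤ 2 →
      ∀ γ γ' δ₁ δ₂ : Γ,
        (δ₁ : G) = etaN (i + i') • σ₁ → (δ₂ : G) = etaN (j + j') • σ₂ →
        lam (i • σ₁ + j • σ₂ + (γ : G)) (i' • σ₁ + j' • σ₂ + (γ' : G))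
          = q ^ (j * i') * μ δ₁ δ₂ * μ γ γ' * μ (δ₁ + δ₂) (γ + γ')) :
    ∀ σ τ ρ : G, lam (σ + τ) ρ * lam σ τ = lam σ (τ + ρ) * lam τ ρ := by
  have hlam' : ∀ i j i' j' : ℕ, i ≤ 2 → j ≤ 2 → i' ≤ 2 → j' ≤ 2 → ∀ γ γ' : Γ,
      lam (i • σ₁ + j • σ₂ + (γ : G)) (i' • σ₁ + j' • σ₂ + (γ' : G)) =
        lamFormula h3 σ₁ σ₂ q μ i j γ i' j' γ' := fun i j i' j' hi hj hi' hj' γ γ' =>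
    hlam i j i' j' hi hj hi' hj' γ γ' _ _ (coe_carry h3 σ₁ _) (coe_carry h3 σ₂ _)
  have hmod (n : ℕ) : n % 3 ≤ 2 := by omega
  intro σ τ ρ
  obtain ⟨⟨i₁, j₁, γ₁⟩, ⟨hi₁, hj₁, rfl⟩, -⟩ := hbasis σ
  obtain ⟨⟨i₂, j₂, γ₂⟩, ⟨hi₂, hj₂, rfl⟩, -⟩ := hbasis τ
  obtain ⟨⟨i₃, j₃, γ₃⟩, ⟨hi₃, hj₃, rfl⟩, -⟩ := hbasis ρ
  rw [canonical_add_canonical h3 σ₁ σ₂ i₁ j₁ i₂ j₂, canonical_add_canonical h3 σ₁ σ₂ i₂ j₂ i₃ j₃,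
    hlam' _ _ _ _ (hmod _) (hmod _) hi₃ hj₃, hlam' _ _ _ _ hi₁ hj₁ hi₂ hj₂,
    hlam' _ _ _ _ hi₁ hj₁ (hmod _) (hmod _), hlam' _ _ _ _ hi₂ hj₂ hi₃ hj₃]
  exact lamFormula_cocycle h3 σ₁ σ₂ hq3 ⟨hμsymm, hμcoc⟩ hi₁ hj₁ hi₂ hj₂ hi₃ hj₃ γ₁ γ₂ γ₃

/-- Let `G` be a torsion-free abelian group, `F` a field of characteristic zero
containing a primitive third root of unity `q`, and `Γ ≤ G` with `3G ⊆ Γ` and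
`|G/Γ| = 9`.  Fix `σ₁, σ₂ ∈ G` whose images form a basis of `G/Γ` over `𝔽₃`, and a
symmetric 2-cocycle `μ` on `Γ`.  Then the map `λ` defined by
`λ(iσ₁+jσ₂+γ, i'σ₁+j'σ₂+γ') = q^{ji'} μ(η(i+i')σ₁, η(j+j')σ₂) μ(γ,γ')
μ(η(i+i')σ₁+η(j+j')σ₂, γ+γ')` is a 2-cocycle on `G`. -/
theorem stmt14 {G F : Type*} [AddCommGroup G] [Field F] [CharZero F]
    (hG : ∀ g : G, g ≠ 0 → ¬IsOfFinAddOrder g)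
    (Γ : AddSubgroup G) (h3 : ∀ g : G, (3 : ℕ) • g ∈ Γ)
    (hcard : Nat.card (G ⧸ Γ) = 9)
    (σ₁ σ₂ : G)
    (hbasis : ∀ σ : G, ∃! t : ℕ × ℕ × Γ, t.1 ≤ 2 ∧ t.2.1 ≤ 2 ∧
      σ = t.1 • σ₁ + t.2.1 • σ₂ + (t.2.2 : G))
    (q : Fˣ) (hq3 : q ^ 3 = 1) (hq1 : q ≠ 1)
    (μ : Γ → Γ → Fˣ)
    (hμsymm : ∀ γ γ' : Γ, μ γ γ' = μ γ' γ)
    (hμcoc : ∀ γ γ' γ'' : Γ, μ (γ + γ') γ'' * μ γ γ' = μ γ (γ' + γ'') * μ γ' γ'')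
    (lam : G → G → Fˣ)
    (hlam : ∀ i j i' j' : ℕ, i ≤ 2 → j ≤ 2 → i' ≤ 2 → j' ≤ 2 →
      ∀ γ γ' δ₁ δ₂ : Γ,
        (δ₁ : G) = etaN (i + i') • σ₁ → (δ₂ : G) = etaN (j + j') • σ₂ →
        lam (i • σ₁ + j • σ₂ + (γ : G)) (i' • σ₁ + j' • σ₂ + (γ' : G))
          = q ^ (j * i') * μ δ₁ δ₂ * μ γ γ' * μ (δ₁ + δ₂) (γ + γ')) :
    ∀ σ τ ρ : G, lam (σ + τ) ρ * lam σ τ = lam σ (τ + ρ) * lam τ ρ :=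
  stmt14_general Γ h3 σ₁ σ₂ hbasis q hq3 μ hμsymm hμcoc lam hlam
end

section
/- Let J be a Jordan G-torus over a field F of characteristic zero, where G is a torsion-free abelian group. If x is a nonzero element of J with x^m ∈ J^σ for some σ ∈ G and positive integer m, then σ ∈ mG and x ∈ J^{σ/m}. -/
/-!
Order `G` through an injective additive map `ψ` into a linearly ordered group; such a map exists
because a torsion-free abelian group embeds into a `ℚ`-vector space, which is ordered
lexicographically in a basis. If `t` is the `ψ`-largest degree occurring in `x`, the component of
`x^m` in degree `m • t` is `(x_t)^m`. It is nonzero: a commutative Jordan algebra in characteristic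
zero is power-associative, so the powers of `x_t` include its iterated squares, which are nonzero
because nonzero homogeneous elements are invertible. As `x^m` is homogeneous of degree `σ`, this
gives `m • t = σ`. The same argument with `-ψ` gives `m • t' = σ` for the `ψ`-smallest degree
`t'`, so `t = t'` by torsion-freeness and `x` is homogeneous.
-/

/-- Powers in a (not necessarily associative) unital algebra: `x^0 = 1`,
`x^{n+1} = x * x^n`.  In a Jordan algebra (power-associative) this is the Jordan power. -/
def apow {J : Type*} [Mul J] [One J] (x : J) : ℕ → J
  | 0 => 1
  | n + 1 => x * apow x n

/-- Restored from older Mathlib: a torsion-free additive monoid (no nonzero element of finite order). -/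
def AddMonoid.IsTorsionFree (G : Type*) [AddMonoid G] : Prop :=
  ∀ g : G, g ≠ 0 → ¬IsOfFinAddOrder g

section Jordan

variable {A : Type*}

theorem IsCommJordan.lmul_comm_rmul_rmul_linearized [NonUnitalNonAssocCommRing A] [IsCommJordan A]
    [IsAddTorsionFree A] (a b c : A) :
    2 • (a * b * (a * c)) + c * b * (a * a) = 2 • (a * (b * (a * c))) + c * (b * (a * a)) := by
  -- twice the part of the Jordan identity at `a + c` that is linear in `c`
  have expand : 2 • (2 • (a * b * (a * c)) + c * b * (a * a)
        - (2 • (a * (b * (a * c))) + c * (b * (a * a)))) =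
      ((a + c) * b * ((a + c) * (a + c)) - (a + c) * (b * ((a + c) * (a + c))))
        - ((a - c) * b * ((a - c) * (a - c)) - (a - c) * (b * ((a - c) * (a - c))))
        - 2 • (c * b * (c * c) - c * (b * (c * c))) := by
    simp only [add_mul, mul_add, sub_mul, mul_sub, mul_comm c a, two_nsmul]
    abel
  simp only [IsCommJordan.lmul_comm_rmul_rmul, sub_self, smul_zero] at expand
  exact sub_eq_zero.mp (nsmul_right_injective two_ne_zero (expand.trans (smul_zero 2).symm))

variable [NonAssocCommRing A] [IsCommJordan A] [IsAddTorsionFree A]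

theorem IsCommJordan.apow_mul_apow (x : A) (i j : ℕ) :
    apow x i * apow x j = apow x (i + j) := by
  suffices h : ∀ n i j, i + j = n → apow x i * apow x j = apow x n from h _ i j rfl
  intro n
  induction n using Nat.strong_induction_on with | _ n ihn =>
  intro i
  induction i using Nat.strong_induction_on with | _ i ihi =>
  intro j hij
  match i, j with
  | 0, j => simp [apow, ← hij]
  | 1, j => simp [apow, ← hij, add_comm 1 j]
  | i + 2, 0 => simp [apow, ← hij]
  | k + 2, l + 1 =>
    have hsq : x * x = apow x 2 := by simp [apow]
    have lin := IsCommJordan.lmul_comm_rmul_rmul_linearized x (apow x l) (apow x (k + 1))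
    have hsucc : ∀ r, x * apow x r = apow x (r + 1) := fun _ => rfl
    -- the other products in `lin` are known by induction: lower total degree, or the same
    -- degree with a smaller first factor
    rw [hsq, hsucc, hsucc, ihn (k + l + 1) (by omega) (k + 1) l (by omega),
      ihn (k + l + 2) (by omega) l (k + 2) (by omega), hsucc, ihn (l + 2) (by omega) l 2 rfl,
      ihi (k + 1) (by omega) (l + 2) (by omega), show k + l + 2 + 1 = n by omega] at lin
    rcases Nat.eq_zero_or_pos k with rfl | hk
    · simp only [zero_add, Nat.reduceAdd, ← succ_nsmul] at lin
      rw [mul_comm]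
      exact nsmul_right_injective three_ne_zero lin
    · rw [mul_comm (apow x (k + l + 1)), ihi 2 (by omega) (k + l + 1) (by omega)] at lin
      rw [mul_comm]
      exact nsmul_right_injective two_ne_zero (add_right_cancel lin)

theorem IsCommJordan.apow_ne_zero_of_mul_self_ne_zero {x : A} (hx : x ≠ 0)
    (hsq : ∀ n, apow x n ≠ 0 → apow x n * apow x n ≠ 0) (k : ℕ) : apow x k ≠ 0 := by
  have h2 : ∀ s, apow x (2 ^ s) ≠ 0 := by
    intro s
    induction s with
    | zero => simpa [apow] using hx
    | succ s ih => simpa [apow_mul_apow, pow_succ, mul_two] using hsq _ ih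
  intro hk
  apply h2 k
  rw [← Nat.add_sub_cancel' (Nat.lt_two_pow_self (n := k)).le, ← apow_mul_apow, hk, zero_mul]

end Jordan

universe u

theorem AddCommGroup.exists_injective_addMonoidHom_lex (G : Type u) [AddCommGroup G]
    [IsAddTorsionFree G] :
    ∃ (ι : Type u) (_ : LinearOrder ι) (ψ : G →+ Lex (ι →₀ ℚ)), Function.Injective ψ := by
  let b := Module.Free.chooseBasis ℚ (DivisibleHull G)
  obtain ⟨o, -⟩ := exists_wellFoundedLT (Module.Free.ChooseBasisIndex ℚ (DivisibleHull G))
  refine ⟨_, o, ((toLexAddEquiv _).toAddMonoidHom.comp b.repr.toAddMonoidHom).comp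
    (DivisibleHull.coeAddMonoidHom G), ?_⟩
  exact (toLexAddEquiv _).injective.comp (b.repr.injective.comp DivisibleHull.coe_injective)

theorem SetLike.apow_mem_graded {ι R σ : Type*} [AddMonoid ι] [Mul R] [One R] [SetLike σ R]
    {𝒜 : ι → σ} [SetLike.GradedOne 𝒜] [SetLike.GradedMul 𝒜] {v : R} {i : ι} (hv : v ∈ 𝒜 i)
    (n : ℕ) : apow v n ∈ 𝒜 (n • i) := by
  induction n with
  | zero => rw [zero_nsmul]; exact SetLike.GradedOne.one_mem
  | succ n ih => rw [succ_nsmul']; exact SetLike.GradedMul.mul_mem hv ih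

namespace DirectSum

variable {ι M R σ L : Type*} [DecidableEq ι]

section Decomposition

variable [AddCommMonoid M] [SetLike σ M] [AddSubmonoidClass σ M] (ℳ : ι → σ) [Decomposition ℳ]

theorem eq_of_mem_of_decompose_ne_zero {x : M} {i j : ι} (hx : x ∈ ℳ i)
    (hj : decompose ℳ x j ≠ 0) : i = j := by
  by_contra hij
  exact hj (ZeroMemClass.coe_eq_zero.mp (decompose_of_mem_ne ℳ hx hij))

theorem mem_of_forall_decompose_eq_zero {x : M} {t : ι} (h : ∀ i, i ≠ t → decompose ℳ x i = 0) :
    x ∈ ℳ t := by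
  have hx : decompose ℳ x = of _ t (decompose ℳ x t) := by
    refine DFinsupp.ext fun i => ?_
    by_cases hi : i = t
    · subst hi; rw [of_eq_same]
    · rw [of_eq_of_ne _ _ _ hi, h i hi]
  rw [← (decompose ℳ).symm_apply_apply x, hx, decompose_symm_of]
  exact SetLike.coe_mem _

end Decomposition

variable [AddMonoid ι] [SetLike σ R] [AddCommMonoid L] [LinearOrder L] [IsOrderedCancelAddMonoid L] (ψ : ι →+ L)

section Mul

variable [NonUnitalNonAssocSemiring R] [AddSubmonoidClass σ R] (𝒜 : ι → σ) [Decomposition 𝒜]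
  [SetLike.GradedMul 𝒜]

theorem coe_decompose_mul_apply [∀ i (x : 𝒜 i), Decidable (x ≠ 0)] (a b : R) (k : ι) :
    (decompose 𝒜 (a * b) k : R) =
      ∑ i ∈ (decompose 𝒜 a).support, ∑ j ∈ (decompose 𝒜 b).support,
        if i + j = k then (decompose 𝒜 a i : R) * decompose 𝒜 b j else 0 := by
  conv_lhs => rw [← sum_support_decompose 𝒜 a, ← sum_support_decompose 𝒜 b, Finset.sum_mul_sum]
  simp only [decompose_sum, sum_apply, AddSubmonoidClass.coe_finsetSum]
  refine Finset.sum_congr rfl fun i _ => Finset.sum_congr rfl fun j _ => ?_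
  have hmem := SetLike.GradedMul.mul_mem (decompose 𝒜 a i).2 (decompose 𝒜 b j).2
  split_ifs with hij
  · rw [← hij, decompose_of_mem_same 𝒜 hmem]
  · rw [decompose_of_mem_ne 𝒜 hmem hij]

variable {𝒜}

theorem le_of_decompose_mul_ne_zero {a b : R} {d e : ι}
    (ha : ∀ i, decompose 𝒜 a i ≠ 0 → ψ i ≤ ψ d) (hb : ∀ j, decompose 𝒜 b j ≠ 0 → ψ j ≤ ψ e)
    {k : ι} (hk : decompose 𝒜 (a * b) k ≠ 0) : ψ k ≤ ψ (d + e) := by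
  classical
  rw [Ne, ← ZeroMemClass.coe_eq_zero, coe_decompose_mul_apply] at hk
  obtain ⟨i, hi, hik⟩ := Finset.exists_ne_zero_of_sum_ne_zero hk
  obtain ⟨j, hj, hijk⟩ := Finset.exists_ne_zero_of_sum_ne_zero hik
  rw [ite_ne_right_iff] at hijk
  rw [← hijk.1, map_add, map_add]
  exact add_le_add (ha i (DFinsupp.mem_support_iff.mp hi)) (hb j (DFinsupp.mem_support_iff.mp hj))

theorem coe_decompose_mul_add {a b : R} {d e : ι} (hψ : Function.Injective ψ)
    (ha : ∀ i, decompose 𝒜 a i ≠ 0 → ψ i ≤ ψ d) (hb : ∀ j, decompose 𝒜 b j ≠ 0 → ψ j ≤ ψ e) :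
    (decompose 𝒜 (a * b) (d + e) : R) = decompose 𝒜 a d * decompose 𝒜 b e := by
  classical
  rw [coe_decompose_mul_apply, ← Finset.sum_product', Finset.sum_eq_single (d, e), if_pos rfl]
  · rintro ⟨i, j⟩ hij hne
    rw [Finset.mem_product, DFinsupp.mem_support_iff, DFinsupp.mem_support_iff] at hij
    refine if_neg fun hsum => hne ?_
    have hψsum : ψ i + ψ j = ψ d + ψ e := by rw [← map_add, ← map_add, hsum]
    obtain ⟨hi, hj⟩ := (add_eq_add_iff_eq_and_eq (ha i hij.1) (hb j hij.2)).mp hψsum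
    rw [hψ hi, hψ hj]
  · intro hde
    rw [Finset.mem_product, DFinsupp.mem_support_iff, DFinsupp.mem_support_iff, not_and_or,
      not_not, not_not] at hde
    rcases hde with hd | he
    · rw [hd, ZeroMemClass.coe_zero, zero_mul, ite_self]
    · rw [he, ZeroMemClass.coe_zero, mul_zero, ite_self]

end Mul

section Pow

variable [NonAssocSemiring R] [AddSubmonoidClass σ R] {𝒜 : ι → σ} [Decomposition 𝒜]
  [SetLike.GradedOne 𝒜] [SetLike.GradedMul 𝒜]

theorem le_of_decompose_apow_ne_zero {x : R} {d : ι} (hx : ∀ i, decompose 𝒜 x i ≠ 0 → ψ i ≤ ψ d)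
    (n : ℕ) {k : ι} (hk : decompose 𝒜 (apow x n) k ≠ 0) : ψ k ≤ ψ (n • d) := by
  induction n generalizing k with
  | zero =>
    rw [← eq_of_mem_of_decompose_ne_zero 𝒜 SetLike.GradedOne.one_mem hk, zero_nsmul]
  | succ n ih =>
    rw [succ_nsmul']
    exact le_of_decompose_mul_ne_zero ψ hx (fun j => ih) hk

theorem coe_decompose_apow_nsmul (hψ : Function.Injective ψ) {x : R} {d : ι}
    (hx : ∀ i, decompose 𝒜 x i ≠ 0 → ψ i ≤ ψ d) (n : ℕ) :
    (decompose 𝒜 (apow x n) (n • d) : R) = apow (decompose 𝒜 x d : R) n := by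
  induction n with
  | zero => rw [zero_nsmul]; exact decompose_of_mem_same 𝒜 SetLike.GradedOne.one_mem
  | succ n ih =>
    rw [succ_nsmul']
    exact (coe_decompose_mul_add ψ hψ hx fun j => le_of_decompose_apow_ne_zero ψ hx n).trans
      (congrArg _ ih)

theorem exists_nsmul_eq_forall_le_of_apow_mem (hψ : Function.Injective ψ) {m : ℕ}
    (hpow : ∀ i, ∀ v ∈ 𝒜 i, v ≠ 0 → apow v m ≠ 0) {x : R} (hx : x ≠ 0) {s : ι}
    (hxm : apow x m ∈ 𝒜 s) : ∃ t, m • t = s ∧ ∀ i, decompose 𝒜 x i ≠ 0 → ψ i ≤ ψ t := by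
  classical
  have hsupp : (decompose 𝒜 x).support.Nonempty := by
    rwa [Finset.nonempty_iff_ne_empty, Ne, DFinsupp.support_eq_empty, ← decompose_zero 𝒜,
      (decompose 𝒜).apply_eq_iff_eq]
  obtain ⟨t, ht, htop⟩ := Finset.exists_max_image _ ψ hsupp
  have hle : ∀ i, decompose 𝒜 x i ≠ 0 → ψ i ≤ ψ t := fun i hi =>
    htop i (DFinsupp.mem_support_iff.mpr hi)
  refine ⟨t, (eq_of_mem_of_decompose_ne_zero 𝒜 hxm ?_).symm, hle⟩
  rw [Ne, ← ZeroMemClass.coe_eq_zero, coe_decompose_apow_nsmul ψ hψ hle]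
  exact hpow t _ (SetLike.coe_mem _)
    (ZeroMemClass.coe_eq_zero.not.mpr (DFinsupp.mem_support_iff.mp ht))

end Pow

end DirectSum

theorem stmt19_general {G F J : Type*} [AddCommGroup G] [DecidableEq G] [Field F] [CharZero F]
    [NonAssocRing J] [Module F J]
    (hG : AddMonoid.IsTorsionFree G)
    -- the multiplication of `J` is `F`-bilinear, commutative, and Jordan
    (hcomm : ∀ a b : J, a * b = b * a)
    (hjordan : ∀ a b : J, (a * b) * (a * a) = a * (b * (a * a)))
    (𝒥 : G → Submodule F J)
    (hinternal : DirectSum.IsInternal 𝒥)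
    (hone : (1 : J) ∈ 𝒥 0)
    (hmul : ∀ σ τ : G, ∀ x ∈ 𝒥 σ, ∀ y ∈ 𝒥 τ, x * y ∈ 𝒥 (σ + τ))
    (hinv : ∀ σ : G, ∀ x ∈ 𝒥 σ, x ≠ 0 → ∃ y : J, x * y = 1 ∧ (x * x) * y = x)
    (x : J) (hx : x ≠ 0) (σ : G) (m : ℕ) (hm : 0 < m)
    (hpow : apow x m ∈ 𝒥 σ) :
    ∃ τ : G, m • τ = σ ∧ x ∈ 𝒥 τ := by
  let : NonAssocCommRing J := { ‹NonAssocRing J› with mul_comm := hcomm }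
  have : IsCommJordan J := ⟨hjordan⟩
  have := IsAddTorsionFree.of_isTorsionFree F J
  have : IsAddTorsionFree G := isAddTorsionFree_iff_not_isOfFinAddOrder.mpr fun g => hG g
  let := hinternal.chooseDecomposition
  have : SetLike.GradedOne 𝒥 := ⟨hone⟩
  have : SetLike.GradedMul 𝒥 := ⟨fun {i j _ _} ha hb => hmul i j _ ha _ hb⟩
  have hsq : ∀ τ, ∀ w ∈ 𝒥 τ, w ≠ 0 → w * w ≠ 0 := fun τ w hw hw0 hww => by
    obtain ⟨y, -, hy⟩ := hinv τ w hw hw0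
    rw [hww, zero_mul] at hy
    exact hw0 hy.symm
  have hpow_ne : ∀ τ, ∀ v ∈ 𝒥 τ, v ≠ 0 → apow v m ≠ 0 := fun τ v hv hv0 =>
    IsCommJordan.apow_ne_zero_of_mul_self_ne_zero hv0
      (fun n => hsq _ _ (SetLike.apow_mem_graded hv n)) m
  obtain ⟨ι, _, ψ, hψ⟩ := AddCommGroup.exists_injective_addMonoidHom_lex G
  obtain ⟨τ, hτ, hmax⟩ := DirectSum.exists_nsmul_eq_forall_le_of_apow_mem ψ hψ hpow_ne hx hpow
  obtain ⟨τ', hτ', hmin⟩ :=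
    DirectSum.exists_nsmul_eq_forall_le_of_apow_mem (-ψ) (neg_injective.comp hψ) hpow_ne hx hpow
  obtain rfl : τ = τ' := nsmul_right_injective hm.ne' (hτ.trans hτ'.symm)
  refine ⟨τ, hτ, DirectSum.mem_of_forall_decompose_eq_zero 𝒥 fun i hi => ?_⟩
  by_contra hne
  exact hi (hψ (le_antisymm (hmax i hne) (neg_le_neg_iff.mp (hmin i hne))))

/-- Let `J` be a Jordan `G`-torus over a field `F` of characteristic zero, `G`
torsion-free abelian.  If `x ≠ 0` and `x^m ∈ J^σ` for some `σ ∈ G` and `m > 0`, then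
`σ ∈ mG` and `x ∈ J^{σ/m}`. -/
theorem stmt19 {G F J : Type*} [AddCommGroup G] [DecidableEq G] [Field F] [CharZero F]
    [NonAssocRing J] [Module F J]
    (hG : AddMonoid.IsTorsionFree G)
    -- the multiplication of `J` is `F`-bilinear, commutative, and Jordan
    (hbil : ∀ (c : F) (a b : J), (c • a) * b = c • (a * b) ∧ a * (c • b) = c • (a * b))
    (hcomm : ∀ a b : J, a * b = b * a)
    (hjordan : ∀ a b : J, (a * b) * (a * a) = a * (b * (a * a)))
    (𝒥 : G → Submodule F J)
    (hinternal : DirectSum.IsInternal 𝒥)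
    (hone : (1 : J) ∈ 𝒥 0)
    (hmul : ∀ σ τ : G, ∀ x ∈ 𝒥 σ, ∀ y ∈ 𝒥 τ, x * y ∈ 𝒥 (σ + τ))
    (hsupp : AddSubgroup.closure {σ : G | 𝒥 σ ≠ ⊥} = ⊤)
    (hdim : ∀ σ : G, Module.rank F (𝒥 σ) ≤ 1)
    (hinv : ∀ σ : G, ∀ x ∈ 𝒥 σ, x ≠ 0 → ∃ y : J, x * y = 1 ∧ (x * x) * y = x)
    (x : J) (hx : x ≠ 0) (σ : G) (m : ℕ) (hm : 0 < m)
    (hpow : apow x m ∈ 𝒥 σ) :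
    ∃ τ : G, m • τ = σ ∧ x ∈ 𝒥 τ :=
  stmt19_general hG hcomm hjordan 𝒥 hinternal hone hmul hinv x hx σ m hm hpow
end
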